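/- arXiv:2411.00700 — 2 statements merged into one kernel-verified Lean document; each statement's English description precedes it below -/
import Mathlib

section
/- With the same setup, ℒ is twice differentiable on (0,1) with ℒ''(f) = 1 / ρ(G(f)); in particular ℒ''(f) > 0, so the Lorenz curve ℒ is strictly convex on (0,1). -/
open MeasureTheory Set Filter

/-- FTC for `x ↦ ∫ y in Iic x, g y` with continuous integrable `g`. -/
lemma ftc_Iic (g : ℝ → ℝ) (hg : Continuous g) (hgi : Integrable g) (x : ℝ) :
    HasDerivAt (fun t => ∫ y in Iic t, g y) (g x) x := by
  have key : ∀ t : ℝ, (∫ y in Iic t, g y) =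
      (∫ y in Iic (0:ℝ), g y) + ∫ y in (0:ℝ)..t, g y := by
    intro t
    rw [← intervalIntegral.integral_Iic_sub_Iic (hgi.integrableOn) (hgi.integrableOn)]
    ring
  have h1 : HasDerivAt (fun t => (∫ y in Iic (0:ℝ), g y) + ∫ y in (0:ℝ)..t, g y) (g x) x := by
    rw [← zero_add (g x)]; exact (hasDerivAt_const x (∫ y in Iic (0:ℝ), g y)).add
      (intervalIntegral.integral_hasDerivAt_right hgi.intervalIntegrable
        (hg.stronglyMeasurableAtFilter _ _) hg.continuousAt)
  exact h1.congr_of_eventuallyEq (Filter.Eventually.of_forall key)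

theorem lorenz_second_derivative_strict_convex
    (ρ : ℝ → ℝ) (hc : Continuous ρ) (hpos : ∀ x, 0 < ρ x)
    (hint : Integrable ρ) (hnorm : ∫ y, ρ y = 1)
    (hmom : Integrable (fun y => y * ρ y))
    (F : ℝ → ℝ) (hF : ∀ x, F x = ∫ y in Iic x, ρ y)
    (G : ℝ → ℝ) (hG : ∀ f ∈ Ioo (0:ℝ) 1, F (G f) = f)
    (𝓛 : ℝ → ℝ) (h𝓛 : ∀ f, 𝓛 f = ∫ y in Iic (G f), y * ρ y) :
    (∀ f ∈ Ioo (0:ℝ) 1, HasDerivAt (deriv 𝓛) (1 / ρ (G f)) f ∧ 0 < 1 / ρ (G f)) ∧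
      StrictConvexOn ℝ (Ioo (0:ℝ) 1) 𝓛 := by
  have hIoo : IsOpen (Ioo (0:ℝ) 1) := isOpen_Ioo
  -- F has derivative ρ everywhere
  have hF' : ∀ x, HasDerivAt F (ρ x) x := fun x =>
    (ftc_Iic ρ hc hint x).congr_of_eventuallyEq
      (Filter.Eventually.of_forall fun t => (hF t))
  -- F is strictly monotone
  have hFmono : StrictMono F :=
    strictMono_of_deriv_pos fun x => by rw [(hF' x).deriv]; exact hpos x
  -- G is strictly monotone on Ioo
  have hGmono : StrictMonoOn G (Ioo (0:ℝ) 1) := by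
    intro a ha b hb hab
    by_contra h
    push_neg at h
    have := hFmono.monotone h
    rw [hG a ha, hG b hb] at this
    exact absurd this (not_le.2 hab)
  -- G is continuous at each point of Ioo
  have hGcont : ∀ f ∈ Ioo (0:ℝ) 1, ContinuousAt G f := by
    intro f hf
    have hmem : ∀ᶠ y in nhds f, y ∈ Ioo (0:ℝ) 1 := hIoo.eventually_mem hf
    rw [ContinuousAt]
    apply tendsto_order.2
    constructor
    · intro b hb
      have hFb : F b < f := by rw [← hG f hf]; exact hFmono hb
      filter_upwards [hmem, eventually_gt_nhds hFb] with y hy hFby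
      rw [← hG y hy] at hFby
      exact hFmono.lt_iff_lt.1 hFby
    · intro b hb
      have hFb : f < F b := by rw [← hG f hf]; exact hFmono hb
      filter_upwards [hmem, eventually_lt_nhds hFb] with y hy hFby
      rw [← hG y hy] at hFby
      exact hFmono.lt_iff_lt.1 hFby
  -- G has derivative (ρ (G f))⁻¹ at f ∈ Ioo
  have hG' : ∀ f ∈ Ioo (0:ℝ) 1, HasDerivAt G (ρ (G f))⁻¹ f := by
    intro f hf
    refine HasDerivAt.of_local_left_inverse (hGcont f hf) (hF' (G f)) (hpos (G f)).ne' ?_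
    filter_upwards [hIoo.eventually_mem hf] with y hy using hG y hy
  -- 𝓛 has derivative G f at f ∈ Ioo
  have hL' : ∀ f ∈ Ioo (0:ℝ) 1, HasDerivAt 𝓛 (G f) f := by
    intro f hf
    have hH : HasDerivAt (fun t => ∫ y in Iic t, y * ρ y) (G f * ρ (G f)) (G f) :=
      ftc_Iic _ (continuous_id.mul hc) hmom (G f)
    have := hH.comp f (hG' f hf)
    have heq : G f * ρ (G f) * (ρ (G f))⁻¹ = G f :=
      mul_inv_cancel_right₀ (hpos (G f)).ne' _
    rw [heq] at this
    exact this.congr_of_eventuallyEq (Filter.Eventually.of_forall fun t => h𝓛 t)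
  -- deriv 𝓛 = G on Ioo
  have hderiv : ∀ f ∈ Ioo (0:ℝ) 1, deriv 𝓛 f = G f := fun f hf => (hL' f hf).deriv
  constructor
  · intro f hf
    refine ⟨?_, one_div_pos.2 (hpos (G f))⟩
    have : HasDerivAt G (1 / ρ (G f)) f := by
      rw [one_div]; exact hG' f hf
    refine this.congr_of_eventuallyEq ?_
    filter_upwards [hIoo.eventually_mem hf] with y hy using (hderiv y hy)
  · apply StrictMonoOn.strictConvexOn_of_deriv (convex_Ioo _ _)
    · exact fun f hf => ((hL' f hf).continuousAt).continuousWithinAt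
    · rw [interior_Ioo]
      intro a ha b hb hab
      rw [hderiv a ha, hderiv b hb]
      exact hGmono ha hb hab
end

section
/- The function ℒ(f,t) = √(D(1−e^{−2σt})/(2σπ)) · exp(−(erf⁻¹(1−2f))²) + (a e^{−σt} + μ(1−e^{−σt})) f satisfies the PDE ∂ℒ/∂t = −D/(∂²ℒ/∂f²) + σ(μ f − ℒ) for f ∈ (0,1), t > 0, where D, σ > 0 and a, μ ∈ ℝ. -/
open MeasureTheory Set Real

/-- The error function `erf z = (2/√π) ∫_0^z e^{-s²} ds`. -/
noncomputable def erf (z : ℝ) : ℝ := (2 / Real.sqrt π) * ∫ s in (0:ℝ)..z, Real.exp (-s ^ 2)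

lemma gauss_cont : Continuous fun s : ℝ => Real.exp (-s ^ 2) := by continuity

lemma erf_hasDerivAt (z : ℝ) :
    HasDerivAt erf ((2 / Real.sqrt π) * Real.exp (-z ^ 2)) z := by
  have h : HasDerivAt (fun z : ℝ => ∫ s in (0:ℝ)..z, Real.exp (-s ^ 2))
      (Real.exp (-z ^ 2)) z :=
    (gauss_cont.integral_hasStrictDerivAt 0 z).hasDerivAt
  exact h.const_mul _

lemma erf_strictMono : StrictMono erf := by
  intro x y hxy
  have key : erf y - erf x = (2 / Real.sqrt π) * ∫ s in x..y, Real.exp (-s ^ 2) := by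
    rw [erf, erf, ← mul_sub,
      intervalIntegral.integral_interval_sub_left (gauss_cont.intervalIntegrable 0 y)
        (gauss_cont.intervalIntegrable 0 x)]
  have hpos : 0 < ∫ s in x..y, Real.exp (-s ^ 2) :=
    intervalIntegral.intervalIntegral_pos_of_pos (gauss_cont.intervalIntegrable x y)
      (fun s => Real.exp_pos _) hxy
  have h2 : 0 < 2 / Real.sqrt π := by
    have := Real.sqrt_pos.mpr Real.pi_pos
    positivity
  nlinarith [mul_pos h2 hpos]

lemma erfinv_contAt (erfinv : ℝ → ℝ) (hinv : ∀ z ∈ Ioo (-1:ℝ) 1, erf (erfinv z) = z)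
    {z₀ : ℝ} (hz : z₀ ∈ Ioo (-1:ℝ) 1) : ContinuousAt erfinv z₀ := by
  rw [Metric.continuousAt_iff]
  intro ε hε
  set x₀ := erfinv z₀ with hx₀
  have h0 : erf x₀ = z₀ := hinv z₀ hz
  have h1 : erf (x₀ - ε) < z₀ := h0 ▸ erf_strictMono (by linarith)
  have h2 : z₀ < erf (x₀ + ε) := h0 ▸ erf_strictMono (by linarith)
  obtain ⟨hzl, hzr⟩ := hz
  refine ⟨min (min (z₀ - erf (x₀ - ε)) (erf (x₀ + ε) - z₀)) (min (z₀ + 1) (1 - z₀)),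
    by simp only [lt_min_iff]; constructor <;> constructor <;> linarith, ?_⟩
  intro z hzd
  rw [Real.dist_eq] at hzd
  have b1 := lt_of_lt_of_le hzd (le_trans (min_le_left _ _) (min_le_left _ _))
  have b2 := lt_of_lt_of_le hzd (le_trans (min_le_left _ _) (min_le_right _ _))
  have b3 := lt_of_lt_of_le hzd (le_trans (min_le_right _ _) (min_le_left _ _))
  have b4 := lt_of_lt_of_le hzd (le_trans (min_le_right _ _) (min_le_right _ _))
  rw [abs_lt] at b1 b2 b3 b4
  obtain ⟨d1, d2⟩ := b1; obtain ⟨d3, d4⟩ := b2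
  obtain ⟨e1, e2⟩ := b3; obtain ⟨e3, e4⟩ := b4
  have hz1 : z ∈ Ioo (-1:ℝ) 1 := ⟨by linarith, by linarith⟩
  have hez : erf (erfinv z) = z := hinv z hz1
  have ha : x₀ - ε < erfinv z := by
    by_contra h
    push_neg at h
    have := erf_strictMono.le_iff_le.mpr h
    rw [hez] at this; linarith
  have hb : erfinv z < x₀ + ε := by
    by_contra h
    push_neg at h
    have := erf_strictMono.le_iff_le.mpr h
    rw [hez] at this; linarith
  rw [Real.dist_eq, abs_lt]
  constructor <;> linarith

lemma erfinv_hasDerivAt (erfinv : ℝ → ℝ) (hinv : ∀ z ∈ Ioo (-1:ℝ) 1, erf (erfinv z) = z)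
    {z : ℝ} (hz : z ∈ Ioo (-1:ℝ) 1) :
    HasDerivAt erfinv (Real.sqrt π / 2 * Real.exp ((erfinv z) ^ 2)) z := by
  have hc := erfinv_contAt erfinv hinv hz
  have hf := erf_hasDerivAt (erfinv z)
  have hsπ : 0 < Real.sqrt π := Real.sqrt_pos.mpr Real.pi_pos
  have hne : (2 / Real.sqrt π) * Real.exp (-(erfinv z) ^ 2) ≠ 0 := by positivity
  have h := hf.of_local_left_inverse hc hne
    (by filter_upwards [Ioo_mem_nhds hz.1 hz.2] with y hy using hinv y hy)
  refine h.congr_deriv ?_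
  rw [mul_inv, inv_div, Real.exp_neg, inv_inv]

theorem ou_lorenz_solution
    (D σ a μ : ℝ) (hD : 0 < D) (hσ : 0 < σ)
    (erfinv : ℝ → ℝ) (hinv : ∀ z ∈ Ioo (-1:ℝ) 1, erf (erfinv z) = z)
    (𝓛 : ℝ → ℝ → ℝ)
    (h𝓛 : ∀ f t, 𝓛 f t =
      Real.sqrt (D * (1 - Real.exp (-2 * σ * t)) / (2 * σ * π)) *
          Real.exp (-(erfinv (1 - 2 * f)) ^ 2)
        + (a * Real.exp (-σ * t) + μ * (1 - Real.exp (-σ * t))) * f) :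
    ∀ f ∈ Ioo (0:ℝ) 1, ∀ t : ℝ, 0 < t →
      deriv (fun τ => 𝓛 f τ) t =
        -D / deriv (deriv (fun x => 𝓛 x t)) f + σ * (μ * f - 𝓛 f t) := by
  intro f hf t ht
  have hπ := Real.pi_pos
  set s : ℝ := Real.exp (-2 * σ * t) with hs_def
  set et : ℝ := Real.exp (-σ * t) with het_def
  have hs0 : 0 < s := Real.exp_pos _
  have hs1 : s < 1 := by
    rw [hs_def, show (1:ℝ) = Real.exp 0 by simp]
    exact Real.exp_lt_exp.mpr (by nlinarith)
  set V : ℝ := D * (1 - s) / (2 * σ * π) with hV_def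
  have hV : 0 < V := by
    have : 0 < 1 - s := by linarith
    positivity
  set A : ℝ := Real.sqrt V with hA_def
  have hA : 0 < A := Real.sqrt_pos.mpr hV
  have hA2 : A ^ 2 = V := Real.sq_sqrt hV.le
  set u : ℝ := erfinv (1 - 2 * f) with hu_def
  set E : ℝ := Real.exp (u ^ 2) with hE_def
  set B : ℝ := Real.exp (-u ^ 2) with hB_def
  have hE : 0 < E := Real.exp_pos _
  have hEB : E * B = 1 := by
    rw [hE_def, hB_def, ← Real.exp_add]; simp
  -- membership
  have hmem : ∀ x ∈ Ioo (0:ℝ) 1, 1 - 2 * x ∈ Ioo (-1:ℝ) 1 :=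
    fun x hx => ⟨by linarith [hx.2], by linarith [hx.1]⟩
  -- spatial derivative pieces
  have hu' : ∀ x ∈ Ioo (0:ℝ) 1,
      HasDerivAt (fun y => erfinv (1 - 2 * y))
        (Real.sqrt π / 2 * Real.exp ((erfinv (1 - 2 * x)) ^ 2) * (-2)) x := by
    intro x hx
    have hin : HasDerivAt (fun y : ℝ => 1 - 2 * y) (-2) x := by
      simpa using ((hasDerivAt_id x).const_mul (2:ℝ)).const_sub 1
    exact (erfinv_hasDerivAt erfinv hinv (hmem x hx)).comp x hin
  have hB' : ∀ x ∈ Ioo (0:ℝ) 1,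
      HasDerivAt (fun y => Real.exp (-(erfinv (1 - 2 * y)) ^ 2))
        (2 * Real.sqrt π * erfinv (1 - 2 * x)) x := by
    intro x hx
    set w : ℝ := erfinv (1 - 2 * x) with hw_def
    have houter : HasDerivAt (fun z : ℝ => Real.exp (-z ^ 2))
        (Real.exp (-w ^ 2) * (-(2 * w))) w := by
      have h1 : HasDerivAt (fun z : ℝ => -z ^ 2) (-(2 * w)) w := by
        simpa using (hasDerivAt_pow 2 w).fun_neg
      exact h1.exp
    have := houter.comp x (hu' x hx)
    refine (this.congr_deriv ?_).congr_deriv rfl; symm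
    have hexp : Real.exp (-w ^ 2) * Real.exp (w ^ 2) = 1 := by
      rw [← Real.exp_add]; simp
    rw [← hw_def]
    linear_combination (-(2 * Real.sqrt π * w)) * hexp
  -- first spatial derivative of 𝓛
  have hL1 : ∀ x ∈ Ioo (0:ℝ) 1,
      HasDerivAt (fun y => 𝓛 y t)
        (A * (2 * Real.sqrt π * erfinv (1 - 2 * x))
          + (a * et + μ * (1 - et))) x := by
    intro x hx
    have hfun : (fun y => 𝓛 y t) = fun y =>
        A * Real.exp (-(erfinv (1 - 2 * y)) ^ 2) + (a * et + μ * (1 - et)) * y := by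
      funext y; rw [h𝓛]
    rw [hfun]
    exact ((hB' x hx).const_mul A).add
      (by simpa using (hasDerivAt_id x).const_mul (a * et + μ * (1 - et)))
  -- the second derivative
  have hev : deriv (fun y => 𝓛 y t) =ᶠ[nhds f]
      (fun x => A * (2 * Real.sqrt π * erfinv (1 - 2 * x)) + (a * et + μ * (1 - et))) := by
    filter_upwards [Ioo_mem_nhds hf.1 hf.2] with x hx
    exact (hL1 x hx).deriv
  have hD2 : deriv (deriv (fun x => 𝓛 x t)) f = -(2 * π * A * E) := by
    rw [hev.deriv_eq]
    have h2 : HasDerivAt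
        (fun x => A * (2 * Real.sqrt π * erfinv (1 - 2 * x)) + (a * et + μ * (1 - et)))
        (A * (2 * Real.sqrt π * (Real.sqrt π / 2 * E * (-2)))) f := by
      have := (((hu' f hf).const_mul (2 * Real.sqrt π)).const_mul A).add_const
        (a * et + μ * (1 - et))
      simpa [hu_def, hE_def] using this
    rw [h2.deriv]
    have hππ : Real.sqrt π * Real.sqrt π = π := Real.mul_self_sqrt hπ.le
    linear_combination (-(2 * A * E)) * hππ
  -- time derivative
  have hLt : HasDerivAt (fun τ => 𝓛 f τ)
      (D * (2 * σ * s) / (2 * σ * π) / (2 * A) * B + (μ - a) * σ * et * f) t := by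
    have hfun : (fun τ => 𝓛 f τ) = fun τ =>
        Real.sqrt (D * (1 - Real.exp (-2 * σ * τ)) / (2 * σ * π)) * B
          + (a * Real.exp (-σ * τ) + μ * (1 - Real.exp (-σ * τ))) * f := by
      funext τ; rw [h𝓛]
    rw [hfun]
    have hexp2 : HasDerivAt (fun τ : ℝ => Real.exp (-2 * σ * τ)) (s * (-2 * σ)) t := by
      have h1 : HasDerivAt (fun τ : ℝ => -2 * σ * τ) (-2 * σ) t := by
        simpa using (hasDerivAt_id t).const_mul (-2 * σ)
      exact h1.exp
    have hV' : HasDerivAt (fun τ : ℝ => D * (1 - Real.exp (-2 * σ * τ)) / (2 * σ * π))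
        (D * (-(s * (-2 * σ))) / (2 * σ * π)) t := by
      exact (((hexp2.const_sub 1).const_mul D).div_const (2 * σ * π))
    have hA' : HasDerivAt (fun τ : ℝ => Real.sqrt (D * (1 - Real.exp (-2 * σ * τ)) / (2 * σ * π)))
        (D * (-(s * (-2 * σ))) / (2 * σ * π) / (2 * A)) t := hV'.sqrt hV.ne'
    have hexp1 : HasDerivAt (fun τ : ℝ => Real.exp (-σ * τ)) (et * (-σ)) t := by
      have h1 : HasDerivAt (fun τ : ℝ => -σ * τ) (-σ) t := by
        simpa using (hasDerivAt_id t).const_mul (-σ)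
      exact h1.exp
    have hC' : HasDerivAt (fun τ : ℝ => a * Real.exp (-σ * τ) + μ * (1 - Real.exp (-σ * τ)))
        (a * (et * (-σ)) + μ * (-(et * (-σ)))) t :=
      (hexp1.const_mul a).add ((hexp1.const_sub 1).const_mul μ)
    have := (hA'.mul_const B).add (hC'.mul_const f)
    refine this.congr_deriv ?_
    ring
  rw [hLt.deriv, hD2, h𝓛]
  rw [← hs_def, ← het_def, ← hu_def, ← hB_def, ← hA_def]
  have hBE : B = E⁻¹ := by
    rw [hB_def, hE_def, Real.exp_neg]
  rw [hBE]
  have hπ' : (π : ℝ) ≠ 0 := hπ.ne'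
  have hA' : A ≠ 0 := hA.ne'
  have hE' : E ≠ 0 := hE.ne'
  have hσ' : σ ≠ 0 := hσ.ne'
  field_simp
  have hA2' : 2 * σ * π * A ^ 2 = D * (1 - s) := by
    rw [hA2, hV_def]; field_simp
  linear_combination hA2'
end
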